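/- arXiv:2001.02353 — 3 statements merged into one kernel-verified Lean document; each statement's English description precedes it below -/
import Mathlib

section
/- ρ = 1 if and only if Σ_{j=2}^∞ (j−1) b_j ≤ b_0, where the left-hand side is a sum of nonnegative terms with value in [0, +∞]. -/
/-!
Subtracting `u · ∑ bⱼ = 0` gives `B(u) = b₀(1 - u) + ∑ₙ bₙ₊₂ (uⁿ⁺² - u)`, and
`uⁿ⁺² - u = -(1 - u)(u + u² + ⋯ + uⁿ⁺¹)`. Since `u + ⋯ + uⁿ⁺¹ ≤ (n + 1) u` on `[0, 1]`, the bound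
`∑ (n + 1) bₙ₊₂ ≤ b₀` forces `B(u) ≥ (1 - u)² b₀ > 0` on `[0, 1)`, so `ρ = 1`. Conversely, if a
finite partial sum `∑ₙ∈s (n + 1) bₙ₊₂` exceeds `b₀`, then `B(u) ≤ (1 - u) Qₛ(u)` for a polynomial
`Qₛ` with `Qₛ(1) < 0`; hence `B < 0` somewhere on `[0, 1)`, and as `B(0) = b₀ ≥ 0` the intermediate
value theorem puts a root in `[0, 1)`.
-/

open Finset

theorem ENNReal.tsum_ofReal_le_ofReal_iff {ι : Type*} {f : ι → ℝ} {c : ℝ} (hf : ∀ i, 0 ≤ f i)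
    (hc : 0 ≤ c) :
    ∑' i, ENNReal.ofReal (f i) ≤ ENNReal.ofReal c ↔ ∀ s : Finset ι, ∑ i ∈ s, f i ≤ c := by
  simp_rw [ENNReal.tsum_eq_iSup_sum, iSup_le_iff,
    ← ENNReal.ofReal_sum_of_nonneg fun i _ => hf i, ENNReal.ofReal_le_ofReal_iff hc]

theorem pow_add_two_sub_self (u : ℝ) (n : ℕ) :
    u ^ (n + 2) - u = -((1 - u) * ∑ k ∈ range (n + 1), u ^ (k + 1)) := by
  have h := geom_sum_mul u (n + 1)
  have hshift : ∑ k ∈ range (n + 1), u ^ (k + 1) = (∑ k ∈ range (n + 1), u ^ k) * u := by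
    simp_rw [sum_mul, pow_succ]
  rw [hshift]
  linear_combination (-u) * h

theorem sum_range_pow_succ_le {u : ℝ} (hu0 : 0 ≤ u) (hu1 : u ≤ 1) (n : ℕ) :
    ∑ k ∈ range (n + 1), u ^ (k + 1) ≤ (n + 1) * u := by
  calc ∑ k ∈ range (n + 1), u ^ (k + 1)
      ≤ ∑ _k ∈ range (n + 1), u := sum_le_sum fun k _ => pow_le_of_le_one hu0 hu1 k.succ_ne_zero
    _ = (n + 1) * u := by simp

section PowerSeries

variable {b : ℕ → ℝ}

theorem Summable.mul_pow_of_abs_le_one (hb : Summable b) {u : ℝ} (hu : |u| ≤ 1) :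
    Summable fun n => b n * u ^ n :=
  hb.abs.of_norm_bounded fun n => by
    simpa [abs_mul, abs_pow] using
      mul_le_of_le_one_right (abs_nonneg (b n)) (pow_le_one₀ (abs_nonneg u) hu)

theorem Summable.mul_pow_sub_self (hb : Summable b) {u : ℝ} (hu : |u| ≤ 1) :
    Summable fun n => b n * (u ^ n - u) := by
  simpa only [mul_sub] using (hb.mul_pow_of_abs_le_one hu).sub (hb.mul_right u)

theorem Summable.continuousOn_tsum_mul_pow (hb : Summable b) :
    ContinuousOn (fun u : ℝ => ∑' n, b n * u ^ n) (Set.Icc (-1) 1) := by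
  refine continuousOn_tsum (fun n => by fun_prop) hb.abs fun n u hu => ?_
  simpa [abs_mul, abs_pow] using
    mul_le_of_le_one_right (abs_nonneg (b n)) (pow_le_one₀ (abs_nonneg u) (abs_le.2 hu))

theorem tsum_mul_pow_eq_of_tsum_eq_zero (hb : Summable b) (hb_total : ∑' n, b n = 0) {u : ℝ}
    (hu : |u| ≤ 1) :
    ∑' n, b n * u ^ n = b 0 * (1 - u) + ∑' n, b (n + 2) * (u ^ (n + 2) - u) := by
  calc ∑' n, b n * u ^ n = ∑' n, b n * (u ^ n - u) := by
        simp only [mul_sub]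
        rw [(hb.mul_pow_of_abs_le_one hu).tsum_sub (hb.mul_right u), tsum_mul_right, hb_total]
        ring
    _ = b 0 * (1 - u) + ∑' n, b (n + 2) * (u ^ (n + 2) - u) := by
        rw [← (hb.mul_pow_sub_self hu).sum_add_tsum_nat_add 2]
        simp [sum_range_succ]

variable (hb_nonneg : ∀ n, n ≠ 1 → 0 ≤ b n) (hb : Summable b) (hb_total : ∑' n, b n = 0)
include hb_nonneg hb hb_total

theorem tsum_mul_pow_pos_of_sum_le (hb1 : b 1 < 0)
    (hbound : ∀ s : Finset ℕ, ∑ n ∈ s, ((n : ℝ) + 1) * b (n + 2) ≤ b 0)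
    {u : ℝ} (hu0 : 0 ≤ u) (hu1 : u < 1) :
    0 < ∑' n, b n * u ^ n := by
  have hnonneg : ∀ n : ℕ, 0 ≤ ((n : ℝ) + 1) * b (n + 2) := fun n =>
    mul_nonneg (by positivity) (hb_nonneg _ (by omega))
  have hT : Summable fun n : ℕ => ((n : ℝ) + 1) * b (n + 2) := summable_of_sum_le hnonneg hbound
  set T := ∑' n : ℕ, ((n : ℝ) + 1) * b (n + 2)
  have hT_le : T ≤ b 0 := hT.tsum_le_of_sum_le hbound
  -- `b₀ > 0`: otherwise all `bₙ₊₂ = 0`, and then `∑ bₙ = 0` would force `b₁ = 0`.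
  have hb0 : 0 < b 0 := by
    have hsplit : b 0 + b 1 + ∑' n, b (n + 2) = 0 := by
      simpa [sum_range_succ] using (hb.sum_add_tsum_nat_add 2).trans hb_total
    have : ∑' n, b (n + 2) ≤ T := ((summable_nat_add_iff 2).2 hb).tsum_le_tsum (fun n => by
      nlinarith [hb_nonneg (n + 2) (by omega), (n.cast_nonneg : (0 : ℝ) ≤ n)]) hT
    linarith
  have hu : |u| ≤ 1 := abs_le.2 ⟨by linarith, hu1.le⟩
  have hterm : ∀ n : ℕ,
      -((1 - u) * u) * (((n : ℝ) + 1) * b (n + 2)) ≤ b (n + 2) * (u ^ (n + 2) - u) := fun n => by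
    rw [pow_add_two_sub_self]
    nlinarith [mul_le_mul_of_nonneg_left (sum_range_pow_succ_le hu0 hu1.le n)
      (mul_nonneg (sub_nonneg.2 hu1.le) (hb_nonneg (n + 2) (by omega)))]
  have htail : -((1 - u) * u) * T ≤ ∑' n, b (n + 2) * (u ^ (n + 2) - u) := by
    rw [← tsum_mul_left]
    exact (hT.mul_left _).tsum_le_tsum hterm ((summable_nat_add_iff 2).2 (hb.mul_pow_sub_self hu))
  rw [tsum_mul_pow_eq_of_tsum_eq_zero hb hb_total hu]
  nlinarith [mul_pos (mul_pos (sub_pos.2 hu1) (sub_pos.2 hu1)) hb0,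
    mul_nonneg (mul_nonneg (sub_nonneg.2 hu1.le) hu0) (sub_nonneg.2 hT_le)]

theorem exists_tsum_mul_pow_eq_zero_of_lt_sum (s : Finset ℕ)
    (hs : b 0 < ∑ n ∈ s, ((n : ℝ) + 1) * b (n + 2)) :
    ∃ v ∈ Set.Ico (0 : ℝ) 1, ∑' n, b n * v ^ n = 0 := by
  set Q : ℝ → ℝ := fun u => b 0 - ∑ n ∈ s, b (n + 2) * ∑ k ∈ range (n + 1), u ^ (k + 1)
  have hQ1 : Q 1 < 0 := by simpa [Q, mul_comm] using hs
  have hQ_cont : ContinuousWithinAt Q (Set.Ico 0 1) 1 := by fun_prop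
  have : (nhdsWithin (1 : ℝ) (Set.Ico 0 1)).NeBot := right_nhdsWithin_Ico_neBot zero_lt_one
  obtain ⟨u, hQu, hu0, hu1⟩ :=
    ((hQ_cont.eventually_lt continuousWithinAt_const hQ1).and self_mem_nhdsWithin).exists
  have hu : |u| ≤ 1 := abs_le.2 ⟨by linarith, hu1.le⟩
  have hterm_nonpos : ∀ n, b (n + 2) * (u ^ (n + 2) - u) ≤ 0 := fun n =>
    mul_nonpos_of_nonneg_of_nonpos (hb_nonneg _ (by omega))
      (sub_nonpos.2 (pow_le_of_le_one hu0 hu1.le (by omega)))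
  have htail : ∑' n, b (n + 2) * (u ^ (n + 2) - u) ≤ -((1 - u) * (b 0 - Q u)) := by
    have hsum : Summable fun n => b (n + 2) * (u ^ (n + 2) - u) :=
      (summable_nat_add_iff 2).2 (hb.mul_pow_sub_self hu)
    calc ∑' n, b (n + 2) * (u ^ (n + 2) - u) ≤ ∑ n ∈ s, b (n + 2) * (u ^ (n + 2) - u) := by
          simpa [tsum_neg, sum_neg_distrib] using
            hsum.neg.sum_le_tsum s fun n _ => neg_nonneg.2 (hterm_nonpos n)
      _ = -((1 - u) * (b 0 - Q u)) := by
          simp only [Q, pow_add_two_sub_self]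
          rw [sub_sub_cancel, mul_sum, ← sum_neg_distrib]
          exact sum_congr rfl fun n _ => by ring
  have hBu : ∑' n, b n * u ^ n < 0 := by
    rw [tsum_mul_pow_eq_of_tsum_eq_zero hb hb_total hu]
    nlinarith [mul_neg_of_pos_of_neg (sub_pos.2 hu1) hQu]
  have hB0 : ∑' n, b n * (0 : ℝ) ^ n = b 0 := by
    rw [tsum_eq_single 0 fun n hn => by simp [zero_pow hn]]
    simp
  have hcont : ContinuousOn (fun v : ℝ => ∑' n, b n * v ^ n) (Set.Icc 0 u) :=
    hb.continuousOn_tsum_mul_pow.mono (Set.Icc_subset_Icc (by norm_num) hu1.le)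
  obtain ⟨v, hv, hv0⟩ := intermediate_value_Icc' hu0 hcont
    ⟨hBu.le, hB0 ▸ hb_nonneg 0 (by omega)⟩
  exact ⟨v, ⟨hv.1, hv.2.trans_lt hu1⟩, hv0⟩

end PowerSeries

theorem stmt_3 (b : ℕ → ℝ)
    (hb_nonneg : ∀ j, j ≠ 1 → 0 ≤ b j) (hb1 : b 1 < 0)
    (hb_sum : Summable b) (hb_total : ∑' j, b j = 0)
    (ρ : ℝ) (hρ : IsLeast {u ∈ Set.Icc (0:ℝ) 1 | (∑' j : ℕ, b j * u ^ j) = 0} ρ) :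
    ρ = 1 ↔ (∑' n : ℕ, ENNReal.ofReal ((n + 1 : ℝ) * b (n + 2))) ≤ ENNReal.ofReal (b 0) := by
  obtain ⟨⟨⟨hρ0, hρ1⟩, hρ_root⟩, hρ_least⟩ := hρ
  rw [ENNReal.tsum_ofReal_le_ofReal_iff
    (fun n => mul_nonneg (by positivity) (hb_nonneg _ (by omega))) (hb_nonneg 0 (by omega))]
  constructor
  · rintro rfl
    by_contra! ⟨s, hs⟩
    obtain ⟨v, hv, hv_root⟩ := exists_tsum_mul_pow_eq_zero_of_lt_sum hb_nonneg hb_sum hb_total s hs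
    linarith [hρ_least ⟨Set.Ico_subset_Icc_self hv, hv_root⟩, hv.2]
  · intro hbound
    by_contra hne
    have := tsum_mul_pow_pos_of_sum_le hb_nonneg hb_sum hb_total hb1 hbound hρ0
      (lt_of_le_of_ne hρ1 hne)
    exact this.ne' hρ_root
end

section
/- If v = (v_k)_{k∈S} satisfies v_k ∈ [0,1) for every k ∈ S, then ρ(v) < 1, the series F_v'(u) = Σ_{j∉S, j≥1} j b_j u^{j−1} + Σ_{k∈S} k b_k v_k u^{k−1} converges absolutely at u = ρ(v), and F_v'(ρ(v)) < 0. -/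
/-!
Write `F_v(u) = ∑ c_j u^j`, where `c_j = b_j v_j` on `S` and `c_j = b_j` off `S`. All `c_j` with
`j ≠ 1` are nonnegative, so `u ↦ c_j u^j` is convex for every `j` and therefore
`F_v(1) - F_v(ρ) ≥ (1 - ρ) F_v'(ρ)`. Since `v_k < 1` and `b_k > 0` on `S`, `F_v(1) < ∑ b_j = 0`;
hence `ρ ≠ 1`, and at the root `ρ` this gives `(1 - ρ) F_v'(ρ) ≤ F_v(1) < 0`.
-/

open Finset

lemma one_sub_mul_nat_mul_pow_pred_le {ρ : ℝ} (hρ0 : 0 ≤ ρ) (hρ1 : ρ ≤ 1) (j : ℕ) :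
    (1 - ρ) * (j * ρ ^ (j - 1)) ≤ 1 - ρ ^ j := by
  have hsum : (j : ℝ) * ρ ^ (j - 1) ≤ ∑ i ∈ range j, ρ ^ i := by
    simpa using card_nsmul_le_sum (range j) (ρ ^ ·) (ρ ^ (j - 1))
      fun i hi => pow_le_pow_of_le_one hρ0 hρ1 (by rw [mem_range] at hi; omega)
  have hgeom : (1 - ρ) * ∑ i ∈ range j, ρ ^ i = 1 - ρ ^ j := by
    linear_combination -geom_sum_mul ρ j
  linarith [mul_le_mul_of_nonneg_left hsum (sub_nonneg.2 hρ1)]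

lemma summable_nat_mul_pow_pred {ρ : ℝ} (hρ0 : 0 ≤ ρ) (hρ1 : ρ < 1) :
    Summable fun j : ℕ => (j : ℝ) * ρ ^ (j - 1) := by
  have hnorm : ‖ρ‖ < 1 := by rwa [Real.norm_of_nonneg hρ0]
  rw [← summable_nat_add_iff 1]
  refine ((hasSum_coe_mul_geometric_of_norm_lt_one hnorm).summable.add
    (summable_geometric_of_lt_one hρ0 hρ1)).congr fun n => ?_
  push_cast
  ring_nf

lemma summable_abs_nat_mul_mul_pow_pred {c : ℕ → ℝ} (hc : Summable c) {ρ : ℝ} (hρ0 : 0 ≤ ρ)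
    (hρ1 : ρ < 1) : Summable fun j : ℕ => |(j : ℝ) * c j * ρ ^ (j - 1)| := by
  obtain ⟨C, hC⟩ := hc.abs.tendsto_atTop_zero.bddAbove_range
  refine ((summable_nat_mul_pow_pred hρ0 hρ1).mul_left C).of_nonneg_of_le (fun _ => abs_nonneg _)
    fun j => ?_
  rw [abs_mul, abs_mul, Nat.abs_cast, abs_of_nonneg (pow_nonneg hρ0 _)]
  have hcj : |c j| ≤ C := hC ⟨j, rfl⟩
  have : (0 : ℝ) ≤ j * ρ ^ (j - 1) := by positivity
  nlinarith

lemma one_sub_mul_tsum_deriv_le {c : ℕ → ℝ} (hc : Summable c) (hc_nonneg : ∀ j ≠ 1, 0 ≤ c j)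
    {ρ : ℝ} (hρ0 : 0 ≤ ρ) (hρ1 : ρ < 1) :
    (1 - ρ) * ∑' j : ℕ, (j : ℝ) * c j * ρ ^ (j - 1) ≤ ∑' j, c j - ∑' j, c j * ρ ^ j := by
  have hcρ : Summable fun j => c j * ρ ^ j :=
    hc.abs.of_norm_bounded fun j => by
      rw [Real.norm_eq_abs, abs_mul, abs_of_nonneg (pow_nonneg hρ0 j)]
      exact mul_le_of_le_one_right (abs_nonneg _) (pow_le_one₀ hρ0 hρ1.le)
  have hterm : ∀ j : ℕ, (1 - ρ) * ((j : ℝ) * c j * ρ ^ (j - 1)) ≤ c j - c j * ρ ^ j := by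
    intro j
    by_cases hj : j = 1
    · subst hj
      exact le_of_eq (by simp only [Nat.cast_one, Nat.sub_self, pow_zero, pow_one]; ring)
    · have := mul_le_mul_of_nonneg_left (one_sub_mul_nat_mul_pow_pred_le hρ0 hρ1.le j)
        (hc_nonneg j hj)
      linarith
  rw [← tsum_mul_left, ← hc.tsum_sub hcρ]
  exact ((summable_abs_nat_mul_mul_pow_pred hc hρ0 hρ1).of_abs.mul_left _).tsum_le_tsum hterm
    (hc.sub hcρ)

noncomputable def weightedCoeff (b : ℕ → ℝ) (S : Finset ℕ) (v : S → ℝ) (j : ℕ) : ℝ :=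
  if h : j ∈ S then b j * v ⟨j, h⟩ else b j

section weightedCoeff

variable {b : ℕ → ℝ} {S : Finset ℕ} {v : S → ℝ}

lemma dite_mul_pow_eq_weightedCoeff (u : ℝ) (j : ℕ) :
    (if h : j ∈ S then b j * v ⟨j, h⟩ * u ^ j else b j * u ^ j) = weightedCoeff b S v j * u ^ j := by
  unfold weightedCoeff
  split <;> ring

lemma dite_nat_mul_pow_pred_eq_weightedCoeff (u : ℝ) (j : ℕ) :
    (if h : j ∈ S then (j : ℝ) * b j * v ⟨j, h⟩ * u ^ (j - 1) else (j : ℝ) * b j * u ^ (j - 1)) =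
      j * weightedCoeff b S v j * u ^ (j - 1) := by
  unfold weightedCoeff
  split <;> ring

lemma weightedCoeff_nonneg (hb : ∀ j ≠ 1, 0 ≤ b j) (hv : ∀ k, 0 ≤ v k) {j : ℕ} (hj : j ≠ 1) :
    0 ≤ weightedCoeff b S v j := by
  unfold weightedCoeff
  split
  · exact mul_nonneg (hb j hj) (hv _)
  · exact hb j hj

lemma weightedCoeff_le (hbS : ∀ k ∈ S, 0 < b k) (hv : ∀ k, v k ≤ 1) (j : ℕ) :
    weightedCoeff b S v j ≤ b j := by
  unfold weightedCoeff
  split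
  · case isTrue h => exact mul_le_of_le_one_right (hbS j h).le (hv _)
  · exact le_rfl

lemma abs_weightedCoeff_le (hv : ∀ k, v k ∈ Set.Icc (0 : ℝ) 1)
    (j : ℕ) : |weightedCoeff b S v j| ≤ |b j| := by
  unfold weightedCoeff
  split
  · case isTrue h =>
    rw [abs_mul, abs_of_nonneg (hv _).1]
    exact mul_le_of_le_one_right (abs_nonneg _) (hv _).2
  · exact le_rfl

lemma summable_weightedCoeff (hb : Summable b) (hv : ∀ k, v k ∈ Set.Icc (0 : ℝ) 1) :
    Summable (weightedCoeff b S v) :=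
  hb.abs.of_norm_bounded fun j => abs_weightedCoeff_le hv j

lemma tsum_weightedCoeff_lt (hb : Summable b) (hbS : ∀ k ∈ S, 0 < b k) (hS : S.Nonempty)
    (hv : ∀ k, v k ∈ Set.Ico (0 : ℝ) 1) : ∑' j, weightedCoeff b S v j < ∑' j, b j := by
  have hv' : ∀ k, v k ∈ Set.Icc (0 : ℝ) 1 := fun k => Set.Ico_subset_Icc_self (hv k)
  obtain ⟨k, hk⟩ := hS
  have hlt : weightedCoeff b S v k < b k := by
    rw [weightedCoeff, dif_pos hk]
    exact mul_lt_of_lt_one_right (hbS k hk) (hv _).2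
  exact (summable_weightedCoeff hb hv').tsum_lt_tsum (weightedCoeff_le hbS fun k => (hv' k).2)
    hlt hb

end weightedCoeff

theorem stmt_4_general (b : ℕ → ℝ)
    (hb_nonneg : ∀ j, j ≠ 1 → 0 ≤ b j)
    (hb_sum : Summable b) (hb_total : ∑' j, b j = 0)
    (S : Finset ℕ) (hS : S.Nonempty)
    (hbS : ∀ k ∈ S, 0 < b k)
    (v : S → ℝ) (hv : ∀ k, v k ∈ Set.Ico (0:ℝ) 1)
    (ρv : ℝ) (hρv : IsLeast {u ∈ Set.Icc (0:ℝ) 1 |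
      (∑' j : ℕ, if h : j ∈ S then b j * v ⟨j, h⟩ * u ^ j else b j * u ^ j) = 0} ρv) :
    ρv < 1 ∧
    Summable (fun j : ℕ =>
      |if h : j ∈ S then (j : ℝ) * b j * v ⟨j, h⟩ * ρv ^ (j - 1)
       else (j : ℝ) * b j * ρv ^ (j - 1)|) ∧
    (∑' j : ℕ, if h : j ∈ S then (j : ℝ) * b j * v ⟨j, h⟩ * ρv ^ (j - 1)
       else (j : ℝ) * b j * ρv ^ (j - 1)) < 0 := by
  obtain ⟨⟨⟨hρ0, hρ1⟩, hroot⟩, -⟩ := hρv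
  simp only [dite_mul_pow_eq_weightedCoeff] at hroot
  simp only [dite_nat_mul_pow_pred_eq_weightedCoeff]
  have hc := summable_weightedCoeff hb_sum fun k => Set.Ico_subset_Icc_self (hv k)
  have hc_neg : ∑' j, weightedCoeff b S v j < 0 :=
    hb_total ▸ tsum_weightedCoeff_lt hb_sum hbS hS hv
  have hρlt : ρv < 1 := hρ1.lt_of_ne <| by
    rintro rfl
    simp only [one_pow, mul_one] at hroot
    exact hc_neg.ne hroot
  have htangent := one_sub_mul_tsum_deriv_le hc
    (fun j hj => weightedCoeff_nonneg hb_nonneg (fun k => (hv k).1) hj) hρ0 hρlt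
  rw [hroot, sub_zero] at htangent
  exact ⟨hρlt, summable_abs_nat_mul_mul_pow_pred hc hρ0 hρlt,
    neg_of_mul_neg_right (htangent.trans_lt hc_neg) (sub_nonneg.2 hρ1)⟩

theorem stmt_4 (b : ℕ → ℝ)
    (hb_nonneg : ∀ j, j ≠ 1 → 0 ≤ b j) (hb1 : b 1 < 0)
    (hb_sum : Summable b) (hb_total : ∑' j, b j = 0)
    (S : Finset ℕ) (hS : S.Nonempty) (hS1 : 1 ∉ S)
    (hbS : ∀ k ∈ S, 0 < b k)
    (v : S → ℝ) (hv : ∀ k, v k ∈ Set.Ico (0:ℝ) 1)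
    (ρv : ℝ) (hρv : IsLeast {u ∈ Set.Icc (0:ℝ) 1 |
      (∑' j : ℕ, if h : j ∈ S then b j * v ⟨j, h⟩ * u ^ j else b j * u ^ j) = 0} ρv) :
    ρv < 1 ∧
    Summable (fun j : ℕ =>
      |if h : j ∈ S then (j : ℝ) * b j * v ⟨j, h⟩ * ρv ^ (j - 1)
       else (j : ℝ) * b j * ρv ^ (j - 1)|) ∧
    (∑' j : ℕ, if h : j ∈ S then (j : ℝ) * b j * v ⟨j, h⟩ * ρv ^ (j - 1)
       else (j : ℝ) * b j * ρv ^ (j - 1)) < 0 :=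
  stmt_4_general b hb_nonneg hb_sum hb_total S hS hbS v hv ρv hρv
end

section
/- Let m ≥ 2 with b_m > 0, and define B_m(u) = Σ_{j≠m} b_j u^j for u ∈ [0,1] and B_m'(u) = Σ_{j≠m, j≥1} j b_j u^{j−1}. Then ρ_0 := min{u ∈ [0,1] : B_m(u) = 0} exists, ρ_0 < 1, and B_m'(ρ_0) < 0. Defining ρ_1 = −b_m ρ_0^m / B_m'(ρ_0) and, for k ≥ 1, ρ_{k+1} = −( Σ_{i≥0, i≠1, i≠m} b_i Σ_{j_1+⋯+j_i=k+1, each j_s ≤ k} ρ_{j_1}⋯ρ_{j_i} + b_m ρ^{*(m)}_{k} ) / B_m'(ρ_0), where ρ^{*(m)}_{k} = Σ_{j_1+⋯+j_m=k} ρ_{j_1}⋯ρ_{j_m}, one has: ρ_k ≥ 0 for all k; for every v ∈ [0,1] the series Σ_{k=0}^∞ ρ_k v^k converges and its sum equals the minimal nonnegative root in [0,1] of the equation B_m(u) + b_m v u^m = 0 in the unknown u; and Σ_{k=0}^∞ ρ_k = ρ. -/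
/-!
Write `a` for the coefficients of `b` other than `b 1` and `b m`, so that on `[0, 1]` the
equation `B_m(u) + b_m v u ^ m = 0` reads `F_v(u) := b₁ u + ∑ a_j u ^ j + b_m v u ^ m = 0`.
Since `B_m(ρ₀) = 0 > -b_m = B_m(1)` and `∑ a_j u ^ j` is convex, `D := -B_m'(ρ₀)` is positive.

The recursion says that `R(v) = ∑ r_k v ^ k` solves `F_v(R(v)) = 0` as a formal power series,
with the terms linear in the newest coefficient `r (k + 1)` collected into `D * r (k + 1)`; in
particular all `r_k ≥ 0`. Expanding `L ^ i` for a partial sum `L = ∑_{k ≤ N} r_k v ^ k` over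
tuples, the tuples with at least two nonzero entries contribute
`L ^ i - ρ₀ ^ i - i ρ₀ ^ (i - 1) (L - ρ₀)`. Comparing these tuples with the ones occurring in
the recursion gives `D (L_{N+1} - L_N) ≤ F_v(L_N)`, hence, by convexity, `L_N ≤ s` for the least
root `s`; conversely, far enough out the recursion dominates the expansion of any fixed `L_N'`,
which gives `F_v(L) ≤ 0` for the limit `L`, hence `s ≤ L`.
-/

open Finset Filter Topology

noncomputable def powSum (a : ℕ → ℝ) (u : ℝ) : ℝ := ∑' j, a j * u ^ j

noncomputable def powSumDeriv (a : ℕ → ℝ) (u : ℝ) : ℝ := ∑' j, j * a j * u ^ (j - 1)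

def powTangentGap (x u : ℝ) (i : ℕ) : ℝ := u ^ i - x ^ i - i * x ^ (i - 1) * (u - x)

section PowSum

variable {a : ℕ → ℝ} {x u y : ℝ}

lemma summable_mul_pow (ha : Summable a) (hu : u ∈ Set.Icc (0 : ℝ) 1) :
    Summable fun j => a j * u ^ j :=
  ha.abs.of_norm_bounded fun j => by
    rw [Real.norm_eq_abs, abs_mul, abs_pow, abs_of_nonneg hu.1]
    exact mul_le_of_le_one_right (abs_nonneg _) (pow_le_one₀ hu.1 hu.2)

lemma summable_natCast_mul_mul_pow (ha : Summable a) (hx0 : 0 ≤ x) (hx1 : x < 1) :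
    Summable fun j : ℕ => j * a j * x ^ (j - 1) := by
  have hgeom : Summable fun j : ℕ => (j : ℝ) * x ^ (j - 1) := by
    rw [← summable_nat_add_iff 1]
    have hx : ‖x‖ < 1 := by rwa [Real.norm_eq_abs, abs_of_nonneg hx0]
    refine ((summable_pow_mul_geometric_of_norm_lt_one 1 hx).add
      (summable_geometric_of_lt_one hx0 hx1)).congr fun j => ?_
    simp only [Nat.add_sub_cancel]
    push_cast
    ring
  refine (hgeom.mul_left (∑' j, |a j|)).of_norm_bounded fun j => ?_
  rw [Real.norm_eq_abs, abs_mul, abs_mul, abs_pow, abs_of_nonneg hx0, Nat.abs_cast]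
  calc (j : ℝ) * |a j| * x ^ (j - 1) = |a j| * (j * x ^ (j - 1)) := by ring
    _ ≤ (∑' j, |a j|) * (j * x ^ (j - 1)) :=
        mul_le_mul_of_nonneg_right (ha.abs.le_tsum j fun _ _ => abs_nonneg _) (by positivity)

lemma continuousOn_powSum (ha : Summable a) : ContinuousOn (powSum a) (Set.Icc 0 1) :=
  continuousOn_tsum (fun j => by fun_prop) ha.abs fun j u hu => by
    rw [Real.norm_eq_abs, abs_mul, abs_pow, abs_of_nonneg hu.1]
    exact mul_le_of_le_one_right (abs_nonneg _) (pow_le_one₀ hu.1 hu.2)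

lemma natCast_mul_pow_mul_sub_le (hx : 0 ≤ x) (hxu : x ≤ u) (huy : u ≤ y) (j : ℕ) :
    j * x ^ (j - 1) * (y - u) ≤ y ^ j - u ^ j := by
  rw [← geom_sum₂_mul y u j, ← geom_sum₂_self]
  have hy : 0 ≤ y := hx.trans (hxu.trans huy)
  gcongr with i hi
  all_goals first | exact pow_nonneg hy _ | linarith

lemma powSumDeriv_mul_sub_le (ha0 : 0 ≤ a) (ha : Summable a) (hx0 : 0 ≤ x) (hx1 : x < 1)
    (hxu : x ≤ u) (huy : u ≤ y) (hy1 : y ≤ 1) :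
    powSumDeriv a x * (y - u) ≤ powSum a y - powSum a u := by
  have hu : u ∈ Set.Icc (0 : ℝ) 1 := ⟨hx0.trans hxu, huy.trans hy1⟩
  have hy : y ∈ Set.Icc (0 : ℝ) 1 := ⟨hu.1.trans huy, hy1⟩
  rw [powSumDeriv, powSum, powSum, ← tsum_mul_right,
    ← (summable_mul_pow ha hy).tsum_sub (summable_mul_pow ha hu)]
  refine ((summable_natCast_mul_mul_pow ha hx0 hx1).mul_right _).tsum_le_tsum (fun j => ?_)
    ((summable_mul_pow ha hy).sub (summable_mul_pow ha hu))
  have := mul_le_mul_of_nonneg_left (natCast_mul_pow_mul_sub_le hx0 hxu huy j) (ha0 j)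
  linarith

lemma summable_mul_powTangentGap (ha : Summable a) (hx0 : 0 ≤ x) (hx1 : x < 1)
    (hu : u ∈ Set.Icc (0 : ℝ) 1) : Summable fun i => a i * powTangentGap x u i := by
  have hx : x ∈ Set.Icc (0 : ℝ) 1 := ⟨hx0, hx1.le⟩
  refine (((summable_mul_pow ha hu).sub (summable_mul_pow ha hx)).sub
    ((summable_natCast_mul_mul_pow ha hx0 hx1).mul_right (u - x))).congr fun i => ?_
  simp only [powTangentGap]
  ring

lemma tsum_mul_powTangentGap (ha : Summable a) (hx0 : 0 ≤ x) (hx1 : x < 1)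
    (hu : u ∈ Set.Icc (0 : ℝ) 1) :
    ∑' i, a i * powTangentGap x u i = powSum a u - powSum a x - powSumDeriv a x * (u - x) := by
  have hx : x ∈ Set.Icc (0 : ℝ) 1 := ⟨hx0, hx1.le⟩
  have hu' := summable_mul_pow ha hu
  have hx' := summable_mul_pow ha hx
  have hd := (summable_natCast_mul_mul_pow ha hx0 hx1).mul_right (u - x)
  rw [powSum, powSum, powSumDeriv, ← tsum_mul_right, ← hu'.tsum_sub hx',
    ← (hu'.sub hx').tsum_sub hd]
  congr 1 with i
  simp only [powTangentGap]
  ring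

end PowSum

section LeastZero

variable {f : ℝ → ℝ}

lemma exists_isLeast_zero (hf : ContinuousOn f (Set.Icc 0 1)) (h0 : 0 ≤ f 0) (h1 : f 1 ≤ 0) :
    ∃ s, IsLeast {u ∈ Set.Icc (0 : ℝ) 1 | f u = 0} s := by
  obtain ⟨x, hx, hfx⟩ := intermediate_value_Icc' zero_le_one hf ⟨h1, h0⟩
  refine IsCompact.exists_isLeast ?_ ⟨x, hx, hfx⟩
  exact isCompact_Icc.of_isClosed_subset
    (hf.preimage_isClosed_of_isClosed isClosed_Icc isClosed_singleton) fun u hu => hu.1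

lemma IsLeast.le_of_nonpos {s y : ℝ} (hs : IsLeast {u ∈ Set.Icc (0 : ℝ) 1 | f u = 0} s)
    (hf : ContinuousOn f (Set.Icc 0 1)) (h0 : 0 ≤ f 0) (hy : y ∈ Set.Icc (0 : ℝ) 1)
    (hfy : f y ≤ 0) :
    s ≤ y := by
  obtain ⟨z, hz, hfz⟩ :=
    intermediate_value_Icc' hy.1 (hf.mono (Set.Icc_subset_Icc_right hy.2)) ⟨hfy, h0⟩
  exact (hs.2 ⟨⟨hz.1, hz.2.trans hy.2⟩, hfz⟩).trans hz.2

end LeastZero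

def partialSum (r : ℕ → ℝ) (v : ℝ) (N : ℕ) : ℝ := ∑ k ∈ range (N + 1), r k * v ^ k

section PartialSum

variable {r : ℕ → ℝ} {v : ℝ}

lemma partialSum_zero (r : ℕ → ℝ) (v : ℝ) : partialSum r v 0 = r 0 := by
  simp [partialSum]

lemma partialSum_sub_zero (r : ℕ → ℝ) (v : ℝ) (N : ℕ) :
    partialSum r v N - r 0 = ∑ k ∈ range N, r (k + 1) * v ^ (k + 1) := by
  rw [partialSum, sum_range_succ']
  simp

lemma monotone_partialSum (hr : 0 ≤ r) (hv : 0 ≤ v) : Monotone (partialSum r v) :=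
  fun _ _ h => sum_le_sum_of_subset_of_nonneg (range_subset_range.2 (by omega))
    fun k _ _ => mul_nonneg (hr k) (pow_nonneg hv k)

lemma le_partialSum (hr : 0 ≤ r) (hv : 0 ≤ v) (N : ℕ) : r 0 ≤ partialSum r v N :=
  partialSum_zero r v ▸ monotone_partialSum hr hv (Nat.zero_le N)

end PartialSum

def tupleWeight (r : ℕ → ℝ) (v : ℝ) {i : ℕ} (t : Fin i → ℕ) : ℝ := ∏ s, r (t s) * v ^ t s

def tupleBox (i N : ℕ) : Finset (Fin i → ℕ) := Fintype.piFinset fun _ => range (N + 1)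

def tupleSimplex (i M : ℕ) : Finset (Fin i → ℕ) :=
  (range (M + 1)).biUnion (Finset.Nat.antidiagonalTuple i)

/-- Equivalently: at least two entries of `t` are nonzero. -/
def IsSpread {i : ℕ} (t : Fin i → ℕ) : Prop := 0 < ∑ s, t s ∧ ∀ s, t s < ∑ s', t s'

instance {i : ℕ} : DecidablePred (IsSpread (i := i)) :=
  fun _ => inferInstanceAs (Decidable (_ ∧ _))

section Tuples

variable {r : ℕ → ℝ} {v : ℝ} {i N M : ℕ} {t : Fin i → ℕ}

lemma mem_tupleBox : t ∈ tupleBox i N ↔ ∀ s, t s ≤ N := by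
  simp [tupleBox]

lemma mem_tupleSimplex : t ∈ tupleSimplex i M ↔ ∑ s, t s ≤ M := by
  simp [tupleSimplex, Finset.Nat.mem_antidiagonalTuple]

lemma tupleBox_subset_tupleSimplex (h : i * N ≤ M) : tupleBox i N ⊆ tupleSimplex i M := by
  intro t ht
  rw [mem_tupleBox] at ht
  rw [mem_tupleSimplex]
  calc ∑ s, t s ≤ ∑ _s : Fin i, N := sum_le_sum fun s _ => ht s
    _ = i * N := by simp
    _ ≤ M := h

lemma tupleSimplex_subset_tupleBox : tupleSimplex i N ⊆ tupleBox i N := fun _ ht =>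
  mem_tupleBox.2 fun s => (single_le_sum (fun _ _ => Nat.zero_le _) (mem_univ s)).trans
    (mem_tupleSimplex.1 ht)

lemma filter_isSpread_tupleSimplex_succ_subset :
    (tupleSimplex i (N + 1)).filter IsSpread ⊆ (tupleBox i N).filter IsSpread := by
  intro t ht
  rw [mem_filter, mem_tupleSimplex] at ht
  exact mem_filter.2 ⟨mem_tupleBox.2 fun s => by have := ht.2.2 s; omega, ht.2⟩

lemma tupleWeight_nonneg (hr : 0 ≤ r) (hv : 0 ≤ v) (t : Fin i → ℕ) : 0 ≤ tupleWeight r v t :=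
  prod_nonneg fun _ _ => mul_nonneg (hr _) (pow_nonneg hv _)

lemma tupleWeight_eq (r : ℕ → ℝ) (v : ℝ) (t : Fin i → ℕ) :
    tupleWeight r v t = (∏ s, r (t s)) * v ^ ∑ s, t s := by
  rw [tupleWeight, prod_mul_distrib, prod_pow_eq_pow_sum]

lemma tupleWeight_single (r : ℕ → ℝ) (v : ℝ) (s : Fin i) (e : ℕ) :
    tupleWeight r v (Pi.single s e) = r e * v ^ e * r 0 ^ (i - 1) := by
  rw [tupleWeight, ← mul_prod_erase _ _ (mem_univ s), Pi.single_eq_same,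
    prod_congr rfl fun s' hs' => by rw [Pi.single_eq_of_ne (ne_of_mem_erase hs')]]
  simp [card_erase_of_mem]

lemma sum_tupleBox (r : ℕ → ℝ) (v : ℝ) (i N : ℕ) :
    ∑ t ∈ tupleBox i N, tupleWeight r v t = partialSum r v N ^ i := by
  rw [tupleBox, partialSum, ← Fin.prod_const, prod_univ_sum]
  rfl

lemma sum_filter_tupleSimplex (r : ℕ → ℝ) (v : ℝ) (i M : ℕ) (P : (Fin i → ℕ) → Prop)
    [DecidablePred P] :
    ∑ t ∈ (tupleSimplex i M).filter P, tupleWeight r v t =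
      ∑ k ∈ range (M + 1), v ^ k * ∑ t ∈ (Finset.Nat.antidiagonalTuple i k).filter P,
        ∏ s, r (t s) := by
  rw [tupleSimplex, filter_biUnion, sum_biUnion]
  · refine sum_congr rfl fun k _ => ?_
    rw [mul_sum]
    refine sum_congr rfl fun t ht => ?_
    rw [tupleWeight_eq, (Finset.Nat.mem_antidiagonalTuple.1 (mem_filter.1 ht).1), mul_comm]
  · intro k _ l _ hkl
    simp only [Function.onFun, disjoint_left, mem_filter, Finset.Nat.mem_antidiagonalTuple]
    intro t hk hl
    exact hkl (hk.1.symm.trans hl.1)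

lemma filter_not_isSpread_tupleBox (i N : ℕ) :
    (tupleBox i N).filter (¬IsSpread ·) =
      insert 0 ((univ ×ˢ range N).image fun p : Fin i × ℕ => Pi.single p.1 (p.2 + 1)) := by
  ext t
  rw [mem_filter, mem_tupleBox]
  simp only [IsSpread, mem_insert, mem_image, mem_product, mem_univ,
    true_and, mem_range, Prod.exists]
  constructor
  · rintro ⟨hbox, hspread⟩
    by_cases h0 : ∑ s, t s = 0
    · exact Or.inl (funext fun s => (sum_eq_zero_iff.1 h0) s (mem_univ s))
    push Not at hspread
    obtain ⟨s, hs⟩ := hspread (Nat.pos_of_ne_zero h0)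
    have hrest : ∀ s', s' ≠ s → t s' = 0 := fun s' hs' => by
      have := sum_le_sum_of_subset (f := t) (subset_univ {s, s'})
      rw [sum_pair hs'.symm] at this
      omega
    refine Or.inr ⟨s, t s - 1, by have := hbox s; omega, funext fun s' => ?_⟩
    rcases eq_or_ne s' s with rfl | hs'
    · rw [Pi.single_eq_same]; omega
    · rw [Pi.single_eq_of_ne hs', hrest s' hs']
  · rintro (rfl | ⟨s, k, hk, rfl⟩)
    · simp
    · refine ⟨fun s' => ?_, fun h => ?_⟩
      · rw [Pi.single_apply]; split <;> omega
      · simpa [Finset.sum_pi_single'] using h.2 s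

lemma sum_filter_not_isSpread_tupleBox (r : ℕ → ℝ) (v : ℝ) (i N : ℕ) :
    ∑ t ∈ (tupleBox i N).filter (¬IsSpread ·), tupleWeight r v t =
      r 0 ^ i + i * r 0 ^ (i - 1) * (partialSum r v N - r 0) := by
  have hinj : Set.InjOn (fun p : Fin i × ℕ => (Pi.single p.1 (p.2 + 1) : Fin i → ℕ))
      ((univ ×ˢ range N : Finset (Fin i × ℕ)) : Set (Fin i × ℕ)) := by
    rintro ⟨s, k⟩ - ⟨s', k'⟩ - h
    have := congr_fun h s
    simp only [Pi.single_eq_same, Pi.single_apply] at this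
    split_ifs at this with hs
    simp_all
  have hzero : (0 : Fin i → ℕ) ∉ (univ ×ˢ range N).image
      fun p : Fin i × ℕ => Pi.single p.1 (p.2 + 1) := by
    simp only [mem_image, not_exists, not_and]
    intro p _ h
    simpa using congr_fun h p.1
  rw [filter_not_isSpread_tupleBox, sum_insert hzero, sum_image hinj, sum_product,
    partialSum_sub_zero,
    mul_sum]
  simp only [tupleWeight_single]
  simp [tupleWeight, mul_sum, mul_comm, mul_left_comm]

lemma sum_filter_isSpread_tupleBox (r : ℕ → ℝ) (v : ℝ) (i N : ℕ) :
    ∑ t ∈ (tupleBox i N).filter IsSpread, tupleWeight r v t =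
      powTangentGap (r 0) (partialSum r v N) i := by
  have h := sum_filter_add_sum_filter_not (tupleBox i N) IsSpread (tupleWeight r v)
  rw [sum_tupleBox, sum_filter_not_isSpread_tupleBox] at h
  rw [powTangentGap]
  linarith

lemma powTangentGap_partialSum_nonneg (hr : 0 ≤ r) (hv : 0 ≤ v) (i N : ℕ) :
    0 ≤ powTangentGap (r 0) (partialSum r v N) i := by
  rw [← sum_filter_isSpread_tupleBox]
  exact sum_nonneg fun t _ => tupleWeight_nonneg hr hv t

lemma powTangentGap_partialSum_le_pow (hr : 0 ≤ r) (hv : 0 ≤ v) (i N : ℕ) :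
    powTangentGap (r 0) (partialSum r v N) i ≤ partialSum r v N ^ i := by
  rw [← sum_filter_isSpread_tupleBox, ← sum_tupleBox]
  exact sum_le_sum_of_subset_of_nonneg (filter_subset _ _)
    fun t _ _ => tupleWeight_nonneg hr hv t

end Tuples

def tupleCoeff (r : ℕ → ℝ) (i k : ℕ) : ℝ :=
  ∑ t ∈ Finset.Nat.antidiagonalTuple i k, ∏ s, r (t s)

/-- `tupleCoeff r i (k + 1)` without its `i` terms `r (k + 1) * r 0 ^ (i - 1)`. -/
def truncCoeff (r : ℕ → ℝ) (i k : ℕ) : ℝ :=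
  ∑ t ∈ (Finset.Nat.antidiagonalTuple i (k + 1)).filter (fun t => ∀ s, t s ≤ k), ∏ s, r (t s)

section TupleCoeffs

variable {r : ℕ → ℝ} {v : ℝ} {i m k N N' : ℕ}

lemma truncCoeff_eq_sum_filter_isSpread (r : ℕ → ℝ) (i k : ℕ) :
    truncCoeff r i k =
      ∑ t ∈ (Finset.Nat.antidiagonalTuple i (k + 1)).filter IsSpread, ∏ s, r (t s) := by
  refine sum_congr (filter_congr fun t ht => ?_) fun _ _ => rfl
  rw [Finset.Nat.mem_antidiagonalTuple] at ht
  simp only [IsSpread, ht]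
  exact ⟨fun h => ⟨k.succ_pos, fun s => Nat.lt_succ_of_le (h s)⟩,
    fun h s => Nat.le_of_lt_succ (h.2 s)⟩

lemma truncCoeff_zero_right (r : ℕ → ℝ) (i : ℕ) : truncCoeff r i 0 = 0 := by
  refine sum_eq_zero fun t ht => ?_
  rw [mem_filter, Finset.Nat.mem_antidiagonalTuple] at ht
  have : ∑ s, t s = 0 := sum_eq_zero fun s _ => Nat.le_zero.1 (ht.2 s)
  omega

lemma tupleCoeff_zero_right (r : ℕ → ℝ) (i : ℕ) : tupleCoeff r i 0 = r 0 ^ i := by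
  simp [tupleCoeff, Finset.Nat.antidiagonalTuple_zero_right]

lemma truncCoeff_nonneg (hr : ∀ j ≤ k, 0 ≤ r j) : 0 ≤ truncCoeff r i k :=
  sum_nonneg fun _ ht => prod_nonneg fun s _ => hr _ ((mem_filter.1 ht).2 s)

lemma tupleCoeff_nonneg (hr : ∀ j ≤ k, 0 ≤ r j) : 0 ≤ tupleCoeff r i k :=
  sum_nonneg fun t ht => prod_nonneg fun s _ => hr _ <| by
    rw [← Finset.Nat.mem_antidiagonalTuple.1 ht]
    exact single_le_sum (fun _ _ => Nat.zero_le _) (mem_univ s)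

lemma sum_truncCoeff_eq (r : ℕ → ℝ) (v : ℝ) (i N : ℕ) :
    ∑ k ∈ range (N + 1), v ^ (k + 1) * truncCoeff r i k =
      ∑ t ∈ (tupleSimplex i (N + 1)).filter IsSpread, tupleWeight r v t := by
  rw [sum_filter_tupleSimplex, sum_range_succ' _ (N + 1)]
  have hzero : ¬IsSpread (0 : Fin i → ℕ) := by simp [IsSpread]
  simp [truncCoeff_eq_sum_filter_isSpread, Finset.Nat.antidiagonalTuple_zero_right,
    filter_singleton, hzero]

lemma sum_tupleCoeff_eq (r : ℕ → ℝ) (v : ℝ) (i N : ℕ) :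
    ∑ k ∈ range (N + 1), v ^ k * tupleCoeff r i k = ∑ t ∈ tupleSimplex i N, tupleWeight r v t := by
  simpa [tupleCoeff] using (sum_filter_tupleSimplex r v i N fun _ => True).symm

lemma sum_truncCoeff_le (hr : 0 ≤ r) (hv : 0 ≤ v) (i N : ℕ) :
    ∑ k ∈ range (N + 1), v ^ (k + 1) * truncCoeff r i k ≤
      powTangentGap (r 0) (partialSum r v N) i := by
  rw [sum_truncCoeff_eq, ← sum_filter_isSpread_tupleBox]
  exact sum_le_sum_of_subset_of_nonneg filter_isSpread_tupleSimplex_succ_subset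
    fun t _ _ => tupleWeight_nonneg hr hv t

lemma le_sum_truncCoeff (hr : 0 ≤ r) (hv : 0 ≤ v) (h : i * N' ≤ N + 1) :
    powTangentGap (r 0) (partialSum r v N') i ≤
      ∑ k ∈ range (N + 1), v ^ (k + 1) * truncCoeff r i k := by
  rw [sum_truncCoeff_eq, ← sum_filter_isSpread_tupleBox]
  exact sum_le_sum_of_subset_of_nonneg (filter_subset_filter _ (tupleBox_subset_tupleSimplex h))
    fun t _ _ => tupleWeight_nonneg hr hv t

lemma sum_tupleCoeff_le (hr : 0 ≤ r) (hv : 0 ≤ v) (i N : ℕ) :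
    ∑ k ∈ range (N + 1), v ^ k * tupleCoeff r i k ≤ partialSum r v N ^ i := by
  rw [sum_tupleCoeff_eq, ← sum_tupleBox]
  exact sum_le_sum_of_subset_of_nonneg tupleSimplex_subset_tupleBox
    fun t _ _ => tupleWeight_nonneg hr hv t

lemma le_sum_tupleCoeff (hr : 0 ≤ r) (hv : 0 ≤ v) (h : i * N' ≤ N) :
    partialSum r v N' ^ i ≤ ∑ k ∈ range (N + 1), v ^ k * tupleCoeff r i k := by
  rw [sum_tupleCoeff_eq, ← sum_tupleBox]
  exact sum_le_sum_of_subset_of_nonneg (tupleBox_subset_tupleSimplex h)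
    fun t _ _ => tupleWeight_nonneg hr hv t

end TupleCoeffs

section Recursion

variable {a r : ℕ → ℝ} {m N : ℕ} {c₁ D β v : ℝ}

lemma nonneg_of_recursion (ha0 : 0 ≤ a) (hβ : 0 ≤ β) (hD0 : 0 < D) (hr0 : 0 ≤ r 0)
    (hrec : ∀ k, D * r (k + 1) = ∑' i, a i * truncCoeff r i k + β * tupleCoeff r m k) :
    0 ≤ r := by
  intro k
  induction k using Nat.strong_induction_on with
  | _ k ih =>
    rcases k with _ | k
    · exact hr0
    · have hle : ∀ j ≤ k, 0 ≤ r j := fun j hj => ih j (by omega)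
      refine (mul_nonneg_iff_of_pos_left hD0).1 ?_
      rw [hrec]
      exact add_nonneg (tsum_nonneg fun i => mul_nonneg (ha0 i) (truncCoeff_nonneg hle))
        (mul_nonneg hβ (tupleCoeff_nonneg hle))

lemma mul_add_powSum_add_mul_pow_le (ha0 : 0 ≤ a) (ha : Summable a) {x u s γ : ℝ}
    (hx0 : 0 ≤ x) (hx1 : x < 1) (hD : c₁ + powSumDeriv a x = -D) (hγ : 0 ≤ γ) (hxu : x ≤ u)
    (hus : u ≤ s) (hs1 : s ≤ 1) :
    c₁ * u + powSum a u + γ * u ^ m ≤ c₁ * s + powSum a s + γ * s ^ m + D * (s - u) := by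
  have htangent := powSumDeriv_mul_sub_le ha0 ha hx0 hx1 hxu hus hs1
  have hpow : γ * u ^ m ≤ γ * s ^ m :=
    mul_le_mul_of_nonneg_left (pow_le_pow_left₀ (hx0.trans hxu) hus m) hγ
  rw [show powSumDeriv a x = -D - c₁ by linarith] at htangent
  nlinarith

/-- The recursion for the coefficients of the least root of `c₁ u + powSum a u + β v u ^ m`. -/
structure RootRecursion (a r : ℕ → ℝ) (m : ℕ) (c₁ D β : ℝ) : Prop where
  coeff_nonneg : 0 ≤ a
  summable : Summable a
  nonneg : 0 ≤ r
  lt_one : r 0 < 1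
  root : c₁ * r 0 + powSum a (r 0) = 0
  deriv : c₁ + powSumDeriv a (r 0) = -D
  pos : 0 < D
  β_nonneg : 0 ≤ β
  recursion : ∀ k, D * r (k + 1) = ∑' i, a i * truncCoeff r i k + β * tupleCoeff r m k

namespace RootRecursion

variable (h : RootRecursion a r m c₁ D β) (hv : 0 ≤ v)
include h hv

lemma summable_mul_sum_truncCoeff (hL : partialSum r v N ≤ 1) :
    Summable fun i => a i * ∑ k ∈ range (N + 1), v ^ (k + 1) * truncCoeff r i k := by
  refine h.summable.of_nonneg_of_le (fun i => mul_nonneg (h.coeff_nonneg i) ?_) fun i => ?_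
  · exact sum_nonneg fun k _ =>
      mul_nonneg (pow_nonneg hv _) (truncCoeff_nonneg fun j _ => h.nonneg j)
  · refine mul_le_of_le_one_right (h.coeff_nonneg i) ?_
    calc _ ≤ powTangentGap (r 0) (partialSum r v N) i := sum_truncCoeff_le h.nonneg hv i N
      _ ≤ partialSum r v N ^ i := powTangentGap_partialSum_le_pow h.nonneg hv i N
      _ ≤ 1 := pow_le_one₀ ((h.nonneg 0).trans (le_partialSum h.nonneg hv N)) hL

lemma mul_partialSum_succ_sub (hL : partialSum r v N ≤ 1) :
    D * (partialSum r v (N + 1) - r 0) =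
      ∑' i, a i * ∑ k ∈ range (N + 1), v ^ (k + 1) * truncCoeff r i k +
        β * v * ∑ k ∈ range (N + 1), v ^ k * tupleCoeff r m k := by
  have hnonneg : ∀ i k, 0 ≤ a i * (v ^ (k + 1) * truncCoeff r i k) := fun i k =>
    mul_nonneg (h.coeff_nonneg i)
      (mul_nonneg (pow_nonneg hv _) (truncCoeff_nonneg fun j _ => h.nonneg j))
  have hsummable : ∀ k ∈ range (N + 1),
      Summable fun i => a i * (v ^ (k + 1) * truncCoeff r i k) := fun k hk =>
    (h.summable_mul_sum_truncCoeff hv hL).of_nonneg_of_le (hnonneg · k) fun i => by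
      rw [mul_sum]
      exact single_le_sum (fun k _ => hnonneg i k) hk
  calc D * (partialSum r v (N + 1) - r 0)
      = ∑ k ∈ range (N + 1), (D * r (k + 1)) * v ^ (k + 1) := by
        rw [partialSum_sub_zero, mul_sum]
        simp only [mul_assoc]
    _ = ∑ k ∈ range (N + 1), (∑' i, a i * (v ^ (k + 1) * truncCoeff r i k) +
          β * v * (v ^ k * tupleCoeff r m k)) := by
        refine sum_congr rfl fun k _ => ?_
        rw [h.recursion, add_mul, ← tsum_mul_right]
        congr 1
        · exact tsum_congr fun i => by ring
        · ring
    _ = _ := by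
        rw [sum_add_distrib, ← Summable.tsum_finsetSum hsummable, ← mul_sum]
        simp only [mul_sum]

lemma mul_partialSum_succ_sub_le (hL : partialSum r v N ≤ 1) :
    D * (partialSum r v (N + 1) - partialSum r v N) ≤
      c₁ * partialSum r v N + powSum a (partialSum r v N) + β * v * partialSum r v N ^ m := by
  set L := partialSum r v N
  have hL' : L ∈ Set.Icc (0 : ℝ) 1 := ⟨(h.nonneg 0).trans (le_partialSum h.nonneg hv N), hL⟩
  have htrunc : ∑' i, a i * ∑ k ∈ range (N + 1), v ^ (k + 1) * truncCoeff r i k ≤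
      ∑' i, a i * powTangentGap (r 0) L i :=
    (h.summable_mul_sum_truncCoeff hv hL).tsum_le_tsum
      (fun i => mul_le_mul_of_nonneg_left (sum_truncCoeff_le h.nonneg hv i N) (h.coeff_nonneg i))
      (summable_mul_powTangentGap h.summable (h.nonneg 0) h.lt_one hL')
  have hcoeff : β * v * ∑ k ∈ range (N + 1), v ^ k * tupleCoeff r m k ≤ β * v * L ^ m :=
    mul_le_mul_of_nonneg_left (sum_tupleCoeff_le h.nonneg hv m N) (mul_nonneg h.β_nonneg hv)
  have hstep := h.mul_partialSum_succ_sub hv hL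
  have hroot := h.root
  rw [tsum_mul_powTangentGap h.summable (h.nonneg 0) h.lt_one hL',
    show powSumDeriv a (r 0) = -D - c₁ by linarith [h.deriv]] at htrunc
  nlinarith

lemma partialSum_le {s : ℝ} (hs : s ∈ Set.Icc (r 0) 1)
    (hFs : c₁ * s + powSum a s + β * v * s ^ m ≤ 0) (N : ℕ) : partialSum r v N ≤ s := by
  induction N with
  | zero => rw [partialSum_zero]; exact hs.1
  | succ N ih =>
    have hstep := h.mul_partialSum_succ_sub_le hv (ih.trans hs.2)
    have hF := mul_add_powSum_add_mul_pow_le (m := m) h.coeff_nonneg h.summable (h.nonneg 0)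
      h.lt_one h.deriv (mul_nonneg h.β_nonneg hv) (le_partialSum h.nonneg hv N) ih hs.2
    have : D * (partialSum r v (N + 1) - s) ≤ 0 := by nlinarith
    nlinarith [h.pos]

lemma le_mul_sub_partialSum {M : ℝ} (hM : ∀ N, partialSum r v N ≤ M) (hM1 : M ≤ 1) (N' : ℕ) :
    c₁ * partialSum r v N' + powSum a (partialSum r v N') + β * v * partialSum r v N' ^ m ≤
      D * (M - partialSum r v N') := by
  set L := partialSum r v N'
  have hL : L ∈ Set.Icc (0 : ℝ) 1 :=
    ⟨(h.nonneg 0).trans (le_partialSum h.nonneg hv N'), (hM N').trans hM1⟩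
  have hfinite : ∀ I, ∑ i ∈ range I, a i * powTangentGap (r 0) L i ≤
      D * (M - r 0) - β * v * L ^ m := by
    intro I
    -- chosen so that `i * N' ≤ N + 1` for all `i < I`, and `m * N' ≤ N`
    set N := (I + m) * N'
    have hN : partialSum r v N ≤ 1 := (hM N).trans hM1
    have htrunc : ∑ i ∈ range I, a i * powTangentGap (r 0) L i ≤
        ∑' i, a i * ∑ k ∈ range (N + 1), v ^ (k + 1) * truncCoeff r i k := by
      refine (sum_le_sum fun i hi => mul_le_mul_of_nonneg_left
        (le_sum_truncCoeff h.nonneg hv ?_) (h.coeff_nonneg i)).trans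
        ((h.summable_mul_sum_truncCoeff hv hN).sum_le_tsum _ fun i _ => ?_)
      · have := Nat.mul_le_mul_right N' (show i ≤ I + m by simp at hi; omega)
        omega
      · exact mul_nonneg (h.coeff_nonneg i) (sum_nonneg fun k _ =>
          mul_nonneg (pow_nonneg hv _) (truncCoeff_nonneg fun j _ => h.nonneg j))
    have hcoeff : β * v * L ^ m ≤ β * v * ∑ k ∈ range (N + 1), v ^ k * tupleCoeff r m k :=
      mul_le_mul_of_nonneg_left
        (le_sum_tupleCoeff h.nonneg hv (Nat.mul_le_mul_right N' (by omega)))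
        (mul_nonneg h.β_nonneg hv)
    have hstep := h.mul_partialSum_succ_sub hv hN
    have hle : D * (partialSum r v (N + 1) - r 0) ≤ D * (M - r 0) :=
      mul_le_mul_of_nonneg_left (sub_le_sub_right (hM (N + 1)) _) h.pos.le
    linarith
  have htsum := Real.tsum_le_of_sum_range_le (fun i =>
    mul_nonneg (h.coeff_nonneg i) (powTangentGap_partialSum_nonneg h.nonneg hv i N')) hfinite
  have hroot := h.root
  rw [tsum_mul_powTangentGap h.summable (h.nonneg 0) h.lt_one hL,
    show powSumDeriv a (r 0) = -D - c₁ by linarith [h.deriv]] at htsum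
  nlinarith

theorem hasSum {s : ℝ} (hs : s ∈ Set.Icc (r 0) 1)
    (hFs : c₁ * s + powSum a s + β * v * s ^ m ≤ 0)
    (hleast : ∀ y ∈ Set.Icc (r 0) 1, c₁ * y + powSum a y + β * v * y ^ m ≤ 0 → s ≤ y) :
    HasSum (fun k => r k * v ^ k) s := by
  have hbound := h.partialSum_le hv hs hFs
  have hnonneg : ∀ k, 0 ≤ r k * v ^ k := fun k => mul_nonneg (h.nonneg k) (pow_nonneg hv k)
  have hrange : ∀ n, ∑ k ∈ range n, r k * v ^ k ≤ s := by
    rintro (_ | n)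
    · simpa using (h.nonneg 0).trans hs.1
    · exact hbound n
  have hsum : Summable fun k => r k * v ^ k := summable_of_sum_range_le hnonneg hrange
  set L := ∑' k, r k * v ^ k
  have hLs : L ≤ s := hsum.tsum_le_of_sum_range_le hrange
  have hL : L ∈ Set.Icc (r 0) 1 :=
    ⟨(le_partialSum h.nonneg hv 0).trans (hsum.sum_le_tsum _ fun k _ => hnonneg k),
      hLs.trans hs.2⟩
  have htendsto : Tendsto (partialSum r v) atTop (𝓝 L) :=
    hsum.hasSum.tendsto_sum_nat.comp (tendsto_add_atTop_nat 1)
  have hcont : ContinuousOn (fun u => c₁ * u + powSum a u + β * v * u ^ m - D * (L - u))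
      (Set.Icc 0 1) := by
    have := continuousOn_powSum h.summable
    fun_prop
  have hFL : c₁ * L + powSum a L + β * v * L ^ m - D * (L - L) ≤ 0 := by
    refine le_of_tendsto' ((hcont _ ⟨(h.nonneg 0).trans hL.1, hL.2⟩).tendsto.comp
      (tendsto_nhdsWithin_iff.2 ⟨htendsto, Eventually.of_forall fun N =>
        ⟨(h.nonneg 0).trans (le_partialSum h.nonneg hv N), (hbound N).trans hs.2⟩⟩))
      fun N => ?_
    have := h.le_mul_sub_partialSum hv (fun N => hsum.sum_le_tsum _ fun k _ => hnonneg k) hL.2 N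
    simp only [Function.comp_apply]
    linarith
  rw [← le_antisymm hLs (hleast L hL (by simpa using hFL))]
  exact hsum.hasSum

end RootRecursion

end Recursion

def restCoeff (b : ℕ → ℝ) (m j : ℕ) : ℝ := if j = 1 ∨ j = m then 0 else b j

section RestCoeff

variable {b : ℕ → ℝ} {m : ℕ}

lemma restCoeff_nonneg (hb : ∀ j, j ≠ 1 → 0 ≤ b j) : 0 ≤ restCoeff b m := fun j => by
  unfold restCoeff
  split_ifs with h
  exacts [le_rfl, hb j fun h1 => h (Or.inl h1)]

lemma summable_restCoeff (hb : Summable b) : Summable (restCoeff b m) :=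
  hb.abs.of_norm_bounded fun j => by
    unfold restCoeff
    split_ifs <;> simp

lemma tsum_ite_eq_add_tsum_ite {f : ℕ → ℝ} (hf : Summable f) (hm : m ≠ 1) :
    (∑' j, if j = m then 0 else f j) = f 1 + ∑' j, if j = 1 ∨ j = m then 0 else f j := by
  have hf' : Summable fun j => if j = m then 0 else f j :=
    (hf.update m 0).congr fun j => by simp [Function.update_apply]
  rw [hf'.tsum_eq_add_tsum_ite 1, if_neg hm.symm]
  refine congrArg _ (tsum_congr fun j => ?_)
  by_cases h1 : j = 1 <;> by_cases h2 : j = m <;> simp [h1, h2]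

lemma tsum_ite_mul_pow_eq (hb : Summable b) (hm : m ≠ 1) {u : ℝ} (hu : u ∈ Set.Icc (0 : ℝ) 1) :
    (∑' j, if j = m then 0 else b j * u ^ j) = b 1 * u + powSum (restCoeff b m) u := by
  rw [tsum_ite_eq_add_tsum_ite (summable_mul_pow hb hu) hm, pow_one, powSum]
  refine congrArg _ (tsum_congr fun j => ?_)
  unfold restCoeff
  split_ifs <;> simp

lemma tsum_ite_natCast_mul_mul_pow_eq (hb : Summable b) (hm : m ≠ 1) {x : ℝ} (hx0 : 0 ≤ x)
    (hx1 : x < 1) :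
    (∑' j : ℕ, if j = m then 0 else (j : ℝ) * b j * x ^ (j - 1)) =
      b 1 + powSumDeriv (restCoeff b m) x := by
  rw [tsum_ite_eq_add_tsum_ite (summable_natCast_mul_mul_pow hb hx0 hx1) hm, powSumDeriv]
  simp only [Nat.cast_one, one_mul, Nat.sub_self, pow_zero, mul_one]
  refine congrArg _ (tsum_congr fun j => ?_)
  unfold restCoeff
  split_ifs <;> simp

lemma tsum_mul_pow_eq (hb : Summable b) (m : ℕ) {u : ℝ} (hu : u ∈ Set.Icc (0 : ℝ) 1) :
    ∑' j, b j * u ^ j = (∑' j, if j = m then 0 else b j * u ^ j) + b m * u ^ m := by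
  rw [(summable_mul_pow hb hu).tsum_eq_add_tsum_ite m, add_comm]

end RestCoeff

section Roots

variable {b : ℕ → ℝ} {m : ℕ}

lemma continuousOn_tsum_ite_add (hb : Summable b) (hm1 : m ≠ 1) (c : ℝ) :
    ContinuousOn (fun u => (∑' j, if j = m then 0 else b j * u ^ j) + c * u ^ m)
      (Set.Icc 0 1) := by
  have := continuousOn_powSum (summable_restCoeff hb (m := m))
  refine ContinuousOn.congr (f := fun u => b 1 * u + powSum (restCoeff b m) u + c * u ^ m)
    (by fun_prop) fun u hu => ?_
  simp only [tsum_ite_mul_pow_eq hb hm1 hu]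

lemma tsum_ite_mul_zero_pow (hm0 : m ≠ 0) :
    (∑' j, if j = m then 0 else b j * (0 : ℝ) ^ j) = b 0 := by
  rw [tsum_eq_single 0 fun j hj => by simp [hj]]
  simp [Ne.symm hm0]

lemma tsum_ite_mul_one_pow (hb : Summable b) (htotal : ∑' j, b j = 0) :
    (∑' j, if j = m then 0 else b j * (1 : ℝ) ^ j) = -b m := by
  have := tsum_mul_pow_eq hb m (u := 1) ⟨zero_le_one, le_rfl⟩
  simp only [one_pow, mul_one] at this ⊢
  linarith

lemma exists_isLeast_root (hb0 : 0 ≤ b 0) (hb : Summable b) (htotal : ∑' j, b j = 0)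
    (hm0 : m ≠ 0) (hm1 : m ≠ 1) (hbm : 0 ≤ b m) {v : ℝ} (hv : v ∈ Set.Icc (0 : ℝ) 1) :
    ∃ s, IsLeast {u ∈ Set.Icc (0 : ℝ) 1 |
      (∑' j, if j = m then 0 else b j * u ^ j) + b m * v * u ^ m = 0} s := by
  refine exists_isLeast_zero (continuousOn_tsum_ite_add hb hm1 _) ?_ ?_
  · simpa [tsum_ite_mul_zero_pow hm0, hm0] using hb0
  · rw [tsum_ite_mul_one_pow hb htotal, one_pow, mul_one]
    nlinarith [hv.2]


variable {ρ₀ : ℝ}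

lemma lt_one_of_isLeast_root (hb : Summable b) (htotal : ∑' j, b j = 0) (hbm : 0 < b m)
    (hρ₀ : IsLeast {u ∈ Set.Icc (0 : ℝ) 1 | (∑' j, if j = m then 0 else b j * u ^ j) = 0} ρ₀) :
    ρ₀ < 1 := by
  refine lt_of_le_of_ne hρ₀.1.1.2 fun h => ?_
  have := hρ₀.1.2
  rw [h, tsum_ite_mul_one_pow hb htotal] at this
  linarith

lemma mul_add_powSum_restCoeff_eq_zero (hb : Summable b) (hm1 : m ≠ 1)
    (hρ₀ : IsLeast {u ∈ Set.Icc (0 : ℝ) 1 | (∑' j, if j = m then 0 else b j * u ^ j) = 0} ρ₀) :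
    b 1 * ρ₀ + powSum (restCoeff b m) ρ₀ = 0 :=
  (tsum_ite_mul_pow_eq hb hm1 hρ₀.1.1).symm.trans hρ₀.1.2

lemma add_powSumDeriv_restCoeff_neg (hb_nonneg : ∀ j, j ≠ 1 → 0 ≤ b j) (hb : Summable b)
    (htotal : ∑' j, b j = 0) (hm1 : m ≠ 1) (hbm : 0 < b m)
    (hρ₀ : IsLeast {u ∈ Set.Icc (0 : ℝ) 1 | (∑' j, if j = m then 0 else b j * u ^ j) = 0} ρ₀) :
    b 1 + powSumDeriv (restCoeff b m) ρ₀ < 0 := by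
  have hρ₀1 := lt_one_of_isLeast_root hb htotal hbm hρ₀
  have htangent := powSumDeriv_mul_sub_le (restCoeff_nonneg (m := m) hb_nonneg)
    (summable_restCoeff hb)
    hρ₀.1.1.1 hρ₀1 le_rfl hρ₀1.le le_rfl
  have hone := tsum_ite_mul_pow_eq hb hm1 (u := 1) ⟨zero_le_one, le_rfl⟩
  rw [tsum_ite_mul_one_pow hb htotal] at hone
  have hroot := mul_add_powSum_restCoeff_eq_zero hb hm1 hρ₀
  nlinarith

lemma rootRecursion_restCoeff (hb_nonneg : ∀ j, j ≠ 1 → 0 ≤ b j) (hb : Summable b)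
    (htotal : ∑' j, b j = 0) (hm1 : m ≠ 1) (hbm : 0 < b m)
    (hρ₀ : IsLeast {u ∈ Set.Icc (0 : ℝ) 1 | (∑' j, if j = m then 0 else b j * u ^ j) = 0} ρ₀)
    {r : ℕ → ℝ} (hr0 : r 0 = ρ₀)
    (hrec : ∀ k, -(b 1 + powSumDeriv (restCoeff b m) ρ₀) * r (k + 1) =
      ∑' i, restCoeff b m i * truncCoeff r i k + b m * tupleCoeff r m k) :
    RootRecursion (restCoeff b m) r m (b 1) (-(b 1 + powSumDeriv (restCoeff b m) ρ₀)) (b m) where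
  coeff_nonneg := restCoeff_nonneg hb_nonneg
  summable := summable_restCoeff hb
  nonneg := nonneg_of_recursion (restCoeff_nonneg hb_nonneg) hbm.le
    (neg_pos.2 (add_powSumDeriv_restCoeff_neg hb_nonneg hb htotal hm1 hbm hρ₀))
    (hr0 ▸ hρ₀.1.1.1) hrec
  lt_one := hr0 ▸ lt_one_of_isLeast_root hb htotal hbm hρ₀
  root := hr0 ▸ mul_add_powSum_restCoeff_eq_zero hb hm1 hρ₀
  deriv := by rw [hr0, neg_neg]
  pos := neg_pos.2 (add_powSumDeriv_restCoeff_neg hb_nonneg hb htotal hm1 hbm hρ₀)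
  β_nonneg := hbm.le
  recursion := hrec

theorem exists_isLeast_and_hasSum (hb0 : 0 ≤ b 0) (hb : Summable b) (htotal : ∑' j, b j = 0)
    (hm0 : m ≠ 0) (hm1 : m ≠ 1)
    (hρ₀ : IsLeast {u ∈ Set.Icc (0 : ℝ) 1 | (∑' j, if j = m then 0 else b j * u ^ j) = 0} ρ₀)
    {r : ℕ → ℝ} {D : ℝ} (h : RootRecursion (restCoeff b m) r m (b 1) D (b m)) (hr0 : r 0 = ρ₀)
    {v : ℝ} (hv : v ∈ Set.Icc (0 : ℝ) 1) :
    ∃ s, IsLeast {u ∈ Set.Icc (0 : ℝ) 1 |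
        (∑' j, if j = m then 0 else b j * u ^ j) + b m * v * u ^ m = 0} s ∧
      HasSum (fun k => r k * v ^ k) s := by
  have hF0 : ∀ w : ℝ, 0 ≤ (∑' j, if j = m then 0 else b j * (0 : ℝ) ^ j) + b m * w * 0 ^ m :=
    fun w => by simpa [tsum_ite_mul_zero_pow hm0, hm0] using hb0
  have hF : ∀ {w u : ℝ}, u ∈ Set.Icc (0 : ℝ) 1 →
      (∑' j, if j = m then 0 else b j * u ^ j) + b m * w * u ^ m =
        b 1 * u + powSum (restCoeff b m) u + b m * w * u ^ m :=
    fun hu => by rw [tsum_ite_mul_pow_eq hb hm1 hu]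
  obtain ⟨s, hs⟩ := exists_isLeast_root hb0 hb htotal hm0 hm1 h.β_nonneg hv
  have hρ₀s : ρ₀ ≤ s := by
    refine hρ₀.le_of_nonpos (continuousOn_tsum_ite_add hb hm1 0 |>.congr fun u _ => by simp)
      (by simpa using hF0 0) hs.1.1 ?_
    have := hs.1.2
    nlinarith [mul_nonneg (mul_nonneg h.β_nonneg hv.1) (pow_nonneg hs.1.1.1 m)]
  refine ⟨s, hs, h.hasSum hv.1 ⟨hr0 ▸ hρ₀s, hs.1.1.2⟩ (hF hs.1.1 ▸ hs.1.2).le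
    fun y hy hFy => ?_⟩
  have hy' : y ∈ Set.Icc (0 : ℝ) 1 := ⟨(h.nonneg 0).trans hy.1, hy.2⟩
  exact hs.le_of_nonpos (continuousOn_tsum_ite_add hb hm1 _) (hF0 v) hy' ((hF hy').trans_le hFy)

lemma mul_succ_eq_of_recursion {b r : ℕ → ℝ} {m : ℕ} {ρ₀ Dv : ℝ} (hDv : Dv ≠ 0)
    (hr0 : r 0 = ρ₀) (hr1 : r 1 = -(b m * ρ₀ ^ m) / Dv)
    (hrec : ∀ k, 1 ≤ k → r (k + 1) =
      -((∑' i, if i = 1 ∨ i = m then 0 else b i * truncCoeff r i k) +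
        b m * tupleCoeff r m k) / Dv) (k : ℕ) :
    -Dv * r (k + 1) = ∑' i, restCoeff b m i * truncCoeff r i k + b m * tupleCoeff r m k := by
  have hcoeff : ∀ i, (if i = 1 ∨ i = m then 0 else b i * truncCoeff r i k) =
      restCoeff b m i * truncCoeff r i k := fun i => by
    unfold restCoeff
    split_ifs <;> simp
  rcases Nat.eq_zero_or_pos k with rfl | hk
  · simp only [truncCoeff_zero_right, mul_zero, tsum_zero, tupleCoeff_zero_right, hr0, hr1,
      zero_add]
    field_simp
  · rw [hrec k hk, ← tsum_congr hcoeff]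
    field_simp

theorem stmt_12_general (b : ℕ → ℝ)
    (hb_nonneg : ∀ j, j ≠ 1 → 0 ≤ b j)
    (hb_sum : Summable b) (hb_total : ∑' j, b j = 0)
    (ρ : ℝ) (hρ : IsLeast {u ∈ Set.Icc (0:ℝ) 1 | (∑' j : ℕ, b j * u ^ j) = 0} ρ)
    (m : ℕ) (hm : 2 ≤ m) (hbm : 0 < b m) :
    ∃ ρ0 : ℝ,
      IsLeast {u ∈ Set.Icc (0:ℝ) 1 |
        (∑' j : ℕ, if j = m then 0 else b j * u ^ j) = 0} ρ0 ∧
      ρ0 < 1 ∧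
      (∑' j : ℕ, if j = m then 0 else (j : ℝ) * b j * ρ0 ^ (j - 1)) < 0 ∧
      ∀ r : ℕ → ℝ,
        r 0 = ρ0 →
        r 1 = -(b m * ρ0 ^ m) /
          (∑' j : ℕ, if j = m then 0 else (j : ℝ) * b j * ρ0 ^ (j - 1)) →
        (∀ k, 1 ≤ k → r (k + 1) =
          -((∑' i : ℕ, if i = 1 ∨ i = m then 0 else
              b i * ∑ t ∈ (Finset.Nat.antidiagonalTuple i (k + 1)).filter
                  (fun t => ∀ s, t s ≤ k), ∏ s, r (t s))
            + b m * ∑ t ∈ Finset.Nat.antidiagonalTuple m k, ∏ s, r (t s)) /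
          (∑' j : ℕ, if j = m then 0 else (j : ℝ) * b j * ρ0 ^ (j - 1))) →
        (∀ k, 0 ≤ r k) ∧
        (∀ v ∈ Set.Icc (0:ℝ) 1, ∃ s : ℝ,
          IsLeast {u ∈ Set.Icc (0:ℝ) 1 |
            (∑' j : ℕ, if j = m then 0 else b j * u ^ j) + b m * v * u ^ m = 0} s ∧
          HasSum (fun k : ℕ => r k * v ^ k) s) ∧
        HasSum r ρ := by
  have hm0 : m ≠ 0 := by omega
  have hm1 : m ≠ 1 := by omega
  have hb0 := hb_nonneg 0 zero_ne_one
  obtain ⟨ρ0, hρ0⟩ := exists_isLeast_root hb0 hb_sum hb_total hm0 hm1 hbm.le (v := 0)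
    ⟨le_rfl, zero_le_one⟩
  simp only [mul_zero, zero_mul, add_zero] at hρ0
  have hρ01 := lt_one_of_isLeast_root hb_sum hb_total hbm hρ0
  have hD := add_powSumDeriv_restCoeff_neg hb_nonneg hb_sum hb_total hm1 hbm hρ0
  have hDeq := tsum_ite_natCast_mul_mul_pow_eq hb_sum hm1 hρ0.1.1.1 hρ01
  refine ⟨ρ0, hρ0, hρ01, hDeq ▸ hD, fun r hr0 hr1 hrec => ?_⟩
  rw [hDeq] at hr1 hrec
  have h := rootRecursion_restCoeff hb_nonneg hb_sum hb_total hm1 hbm hρ0 hr0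
    (mul_succ_eq_of_recursion hD.ne hr0 hr1 hrec)
  have hmain := fun v (hv : v ∈ Set.Icc (0 : ℝ) 1) =>
    exists_isLeast_and_hasSum hb0 hb_sum hb_total hm0 hm1 hρ0 h hr0 hv
  refine ⟨h.nonneg, hmain, ?_⟩
  obtain ⟨s, hs, hsum⟩ := hmain 1 ⟨zero_le_one, le_rfl⟩
  have hset : {u ∈ Set.Icc (0 : ℝ) 1 |
      (∑' j, if j = m then 0 else b j * u ^ j) + b m * 1 * u ^ m = 0} =
        {u ∈ Set.Icc (0 : ℝ) 1 | ∑' j, b j * u ^ j = 0} :=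
    Set.sep_ext_iff.2 fun u hu => by rw [tsum_mul_pow_eq hb_sum m hu, mul_one]
  rw [hset] at hs
  simpa [hs.unique hρ] using hsum

theorem stmt_12 (b : ℕ → ℝ)
    (hb_nonneg : ∀ j, j ≠ 1 → 0 ≤ b j) (hb1 : b 1 < 0)
    (hb_sum : Summable b) (hb_total : ∑' j, b j = 0)
    (ρ : ℝ) (hρ : IsLeast {u ∈ Set.Icc (0:ℝ) 1 | (∑' j : ℕ, b j * u ^ j) = 0} ρ)
    (m : ℕ) (hm : 2 ≤ m) (hbm : 0 < b m) :
    ∃ ρ0 : ℝ,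
      IsLeast {u ∈ Set.Icc (0:ℝ) 1 |
        (∑' j : ℕ, if j = m then 0 else b j * u ^ j) = 0} ρ0 ∧
      ρ0 < 1 ∧
      (∑' j : ℕ, if j = m then 0 else (j : ℝ) * b j * ρ0 ^ (j - 1)) < 0 ∧
      ∀ r : ℕ → ℝ,
        r 0 = ρ0 →
        r 1 = -(b m * ρ0 ^ m) /
          (∑' j : ℕ, if j = m then 0 else (j : ℝ) * b j * ρ0 ^ (j - 1)) →
        (∀ k, 1 ≤ k → r (k + 1) =
          -((∑' i : ℕ, if i = 1 ∨ i = m then 0 else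
              b i * ∑ t ∈ (Finset.Nat.antidiagonalTuple i (k + 1)).filter
                  (fun t => ∀ s, t s ≤ k), ∏ s, r (t s))
            + b m * ∑ t ∈ Finset.Nat.antidiagonalTuple m k, ∏ s, r (t s)) /
          (∑' j : ℕ, if j = m then 0 else (j : ℝ) * b j * ρ0 ^ (j - 1))) →
        (∀ k, 0 ≤ r k) ∧
        (∀ v ∈ Set.Icc (0:ℝ) 1, ∃ s : ℝ,
          IsLeast {u ∈ Set.Icc (0:ℝ) 1 |
            (∑' j : ℕ, if j = m then 0 else b j * u ^ j) + b m * v * u ^ m = 0} s ∧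
          HasSum (fun k : ℕ => r k * v ^ k) s) ∧
        HasSum r ρ :=
  stmt_12_general b hb_nonneg hb_sum hb_total ρ hρ m hm hbm
end Roots
end
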